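/- For all real numbers μ, ω, t, x and every real σ > 0, the free Gaussian wavepacket I(x,t) = ∫_{ℝ} exp(−(κ−μ)²/(2σ²)) · e^{iκx} · e^{−iωtκ²} dκ satisfies |I(x,t)| = √(2π) · σ · (1 + 4σ⁴ω²t²)^{−1/4} · exp( −(x − 2μωt)² / (2(1/σ² + 4σ²ω²t²)) ). In particular, the modulus of the wavepacket is a Gaussian in x with mean 2μωt and squared width σ_x²(t) = 1/σ² + 4σ²ω²t², so that at t = 0 the spatial spread is Δx = 1/σ and it grows linearly in t for large t. -/

import Mathlib

/-!
Combining the exponentials, the integrand is `exp (b κ² + c κ + d)` with `b = -(1/(2σ²) + iωt)`,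
`c = μ/σ² + ix`, `d = -μ²/(2σ²)`. Since `Re b < 0`, the complex Gaussian integral gives
`(π / -b)^{1/2} · exp (d - c²/(4b))`, whose modulus is `√(π/|b|) · exp (Re (d - c²/(4b)))`;
with `|b| = √(1 + 4σ⁴ω²t²)/(2σ²)` the rest is algebra.
-/

open MeasureTheory Real Complex

/-- The free Gaussian wavepacket `I(x,t)`. -/
noncomputable def gaussPacket (μ σ ω t x : ℝ) : ℂ :=
  ∫ κ : ℝ, (Real.exp (-(κ - μ) ^ 2 / (2 * σ ^ 2)) : ℂ) *
    Complex.exp (Complex.I * κ * x) * Complex.exp (-Complex.I * ω * t * κ ^ 2)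

theorem norm_integral_cexp_quadratic {b : ℂ} (hb : b.re < 0) (c d : ℂ) :
    ‖∫ x : ℝ, cexp (b * x ^ 2 + c * x + d)‖ =
      √(π / ‖b‖) * Real.exp (d - c ^ 2 / (4 * b)).re := by
  rw [integral_cexp_quadratic hb, norm_mul, norm_exp,
    show (1 / 2 : ℂ) = ((1 / 2 : ℝ) : ℂ) by norm_num, norm_cpow_real, norm_div, norm_neg,
    norm_real, norm_of_nonneg pi_pos.le, sqrt_eq_rpow]

theorem gaussPacket_eq_integral_cexp_quadratic (μ σ ω t x : ℝ) :
    gaussPacket μ σ ω t x =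
      ∫ κ : ℝ, cexp (-((1 / (2 * σ ^ 2) : ℝ) + (ω * t : ℝ) * I) * κ ^ 2 +
        (μ / σ ^ 2 + x * I) * κ + -μ ^ 2 / (2 * σ ^ 2)) := by
  refine integral_congr_ae (Filter.Eventually.of_forall fun κ => ?_)
  simp only [ofReal_exp, ← Complex.exp_add]
  congr 1
  push_cast
  field_simp
  ring

theorem norm_gaussPacket_coeff (ω t : ℝ) {σ : ℝ} (hσ : σ ≠ 0) :
    ‖-(((1 / (2 * σ ^ 2) : ℝ) : ℂ) + (ω * t : ℝ) * I)‖ =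
      √(1 + 4 * σ ^ 4 * ω ^ 2 * t ^ 2) / (2 * σ ^ 2) := by
  have hsq : (1 / (2 * σ ^ 2)) ^ 2 + (ω * t) ^ 2 =
      (1 + 4 * σ ^ 4 * ω ^ 2 * t ^ 2) / (2 * σ ^ 2) ^ 2 := by
    field_simp
    ring
  rw [norm_neg, norm_add_mul_I, hsq, sqrt_div' _ (by positivity), sqrt_sq (by positivity)]

theorem re_gaussPacket_exponent (μ ω t x : ℝ) {σ : ℝ} (hσ : σ ≠ 0) :
    ((-μ ^ 2 / (2 * σ ^ 2) : ℂ) -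
        (μ / σ ^ 2 + x * I) ^ 2 / (4 * -(((1 / (2 * σ ^ 2) : ℝ) : ℂ) + (ω * t : ℝ) * I))).re =
      -(x - 2 * μ * ω * t) ^ 2 / (2 * (1 / σ ^ 2 + 4 * σ ^ 2 * ω ^ 2 * t ^ 2)) := by
  have hD : 1 + 4 * σ ^ 4 * ω ^ 2 * t ^ 2 ≠ 0 := by positivity
  simp only [pow_two]
  simp [Complex.div_re, Complex.normSq_apply, Complex.div_im]
  field_simp
  ring

theorem sqrt_pi_div_sqrt_div_two_mul_sq {σ : ℝ} (hσ : 0 < σ) {D : ℝ} (hD : 0 < D) :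
    √(π / (√D / (2 * σ ^ 2))) = √(2 * π) * σ * D ^ (-(1 / 4) : ℝ) := by
  have hsqrt_sqrt : √(√D) = D ^ (1 / 4 : ℝ) := by
    rw [sqrt_eq_rpow, sqrt_eq_rpow, ← rpow_mul hD.le]
    norm_num
  rw [div_div_eq_mul_div, sqrt_div' _ (sqrt_nonneg D), hsqrt_sqrt, rpow_neg hD.le,
    ← div_eq_mul_inv, show π * (2 * σ ^ 2) = 2 * π * σ ^ 2 by ring,
    sqrt_mul' _ (sq_nonneg σ), sqrt_sq hσ.le]

/-- The modulus of the free Gaussian wavepacket is a Gaussian in `x` with mean `2μωt`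
and squared width `1/σ² + 4σ²ω²t²`. -/
theorem gaussPacket_abs (μ σ ω t x : ℝ) (hσ : 0 < σ) :
    ‖gaussPacket μ σ ω t x‖ =
      Real.sqrt (2 * Real.pi) * σ * (1 + 4 * σ ^ 4 * ω ^ 2 * t ^ 2) ^ (-(1 / 4) : ℝ) *
        Real.exp (-(x - 2 * μ * ω * t) ^ 2 /
          (2 * (1 / σ ^ 2 + 4 * σ ^ 2 * ω ^ 2 * t ^ 2))) := by
  have hb : (-(((1 / (2 * σ ^ 2) : ℝ) : ℂ) + (ω * t : ℝ) * I)).re < 0 := by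
    simp only [neg_re, add_re, ofReal_re, re_ofReal_mul, I_re, mul_zero, add_zero, neg_lt_zero]
    positivity
  rw [gaussPacket_eq_integral_cexp_quadratic, norm_integral_cexp_quadratic hb,
    norm_gaussPacket_coeff ω t hσ.ne', re_gaussPacket_exponent μ ω t x hσ.ne',
    sqrt_pi_div_sqrt_div_two_mul_sq hσ (by positivity)]
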